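/- arXiv:2310.06990 — 3 statements merged into one kernel-verified Lean document; each statement's English description precedes it below -/
import Mathlib

section
/- Let $(H,[-,-,-]_H,\{-,-,-\}_H)$ be a 3-Leibniz-Lie algebra. Then the bracket $\langle h_1,h_2,h_3\rangle := [h_1,h_2,h_3]_H + \{h_1,h_2,h_3\}_H$ defines a 3-Leibniz algebra structure on $H$. -/
/-!
Expand the fundamental identity of `[-,-,-] + {-,-,-}` by additivity in each slot. Every mixed
term vanishes: `{-,-,[-,-,-]} = 0` directly, and `[-,-,-]` with a `{-,-,-}` argument in any slot
is zero because skew-symmetry moves that argument to the first slot. What remains is the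
fundamental identity of `[-,-,-]` plus the defining identity of `{-,-,-}`.
-/

/-- A map of three arguments that is linear in each slot. -/
def Trilinear (K : Type*) [Field K] {V₁ V₂ V₃ W : Type*}
    [AddCommGroup V₁] [Module K V₁] [AddCommGroup V₂] [Module K V₂]
    [AddCommGroup V₃] [Module K V₃] [AddCommGroup W] [Module K W]
    (f : V₁ → V₂ → V₃ → W) : Prop :=
  (∀ x y b c, f (x + y) b c = f x b c + f y b c) ∧
  (∀ (r : K) x b c, f (r • x) b c = r • f x b c) ∧
  (∀ a x y c, f a (x + y) c = f a x c + f a y c) ∧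
  (∀ (r : K) a x c, f a (r • x) c = r • f a x c) ∧
  (∀ a b x y, f a b (x + y) = f a b x + f a b y) ∧
  (∀ (r : K) a b x, f a b (r • x) = r • f a b x)

/-- A map of two arguments that is linear in each slot. -/
def Bilinear (K : Type*) [Field K] {V₁ V₂ W : Type*}
    [AddCommGroup V₁] [Module K V₁] [AddCommGroup V₂] [Module K V₂]
    [AddCommGroup W] [Module K W] (f : V₁ → V₂ → W) : Prop :=
  (∀ x y b, f (x + y) b = f x b + f y b) ∧
  (∀ (r : K) x b, f (r • x) b = r • f x b) ∧
  (∀ a x y, f a (x + y) = f a x + f a y) ∧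
  (∀ (r : K) a x, f a (r • x) = r • f a x)

/-- The fundamental identity for a ternary bracket. -/
def FundId {V : Type*} [AddCommGroup V] (f : V → V → V → V) : Prop :=
  ∀ a b c d e, f a b (f c d e) = f (f a b c) d e + f c (f a b d) e + f c d (f a b e)

/-- Skew-symmetry of a ternary bracket. -/
def Skew {V : Type*} [AddCommGroup V] (f : V → V → V → V) : Prop :=
  (∀ a b c, f a b c = - f b a c) ∧ (∀ a b c, f a b c = - f a c b)

/-- A 3-Lie algebra structure: trilinear, skew-symmetric bracket
satisfying the fundamental identity. -/
def Is3Lie (K : Type*) [Field K] {V : Type*} [AddCommGroup V] [Module K V]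
    (f : V → V → V → V) : Prop :=
  Trilinear K f ∧ Skew f ∧ FundId f

/-- A 3-Leibniz algebra structure: trilinear bracket satisfying
the fundamental identity (no skew-symmetry required). -/
def Is3Leibniz (K : Type*) [Field K] {V : Type*} [AddCommGroup V] [Module K V]
    (f : V → V → V → V) : Prop :=
  Trilinear K f ∧ FundId f

/-- A representation of a 3-Lie algebra `(L, brL)` on a vector space `H`,
given by a (skew-symmetric in the first two slots) map `ρ : L → L → H → H`. -/
def Is3LieRep (K : Type*) [Field K] {L H : Type*} [AddCommGroup L] [Module K L]
    [AddCommGroup H] [Module K H] (brL : L → L → L → L) (ρ : L → L → H → H) : Prop :=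
  Trilinear K ρ ∧ (∀ a b h, ρ a b h = - ρ b a h) ∧
  (∀ a b c d h, ρ (brL a b c) d h = ρ b c (ρ a d h) + ρ c a (ρ b d h) + ρ a b (ρ c d h)) ∧
  (∀ a b c d h, ρ a b (ρ c d h) = ρ c d (ρ a b h) + ρ (brL a b c) d h + ρ c (brL a b d) h)

/-- A coherent action of the 3-Lie algebra `(L, brL)` on the 3-Lie algebra `(H, brH)`. -/
def IsCoherentAction (K : Type*) [Field K] {L H : Type*} [AddCommGroup L] [Module K L]
    [AddCommGroup H] [Module K H] (brL : L → L → L → L) (brH : H → H → H → H)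
    (ρ : L → L → H → H) : Prop :=
  Is3LieRep K brL ρ ∧
  (∀ a b h₁ h₂ h₃, ρ a b (brH h₁ h₂ h₃)
      = brH (ρ a b h₁) h₂ h₃ + brH h₁ (ρ a b h₂) h₃ + brH h₁ h₂ (ρ a b h₃)) ∧
  (∀ a b h₁ h₂ h₃, brH (ρ a b h₁) h₂ h₃ = 0)

/-- A nonabelian embedding tensor on `(L, brL)` with respect to the coherent
action `ρ` of `L` on `(H, brH)`. -/
def IsNAEmbeddingTensor (K : Type*) [Field K] {L H : Type*} [AddCommGroup L] [Module K L]
    [AddCommGroup H] [Module K H] (brL : L → L → L → L) (brH : H → H → H → H)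
    (ρ : L → L → H → H) (Λ : H →ₗ[K] L) : Prop :=
  ∀ h₁ h₂ h₃, brL (Λ h₁) (Λ h₂) (Λ h₃) = Λ (ρ (Λ h₁) (Λ h₂) h₃ + brH h₁ h₂ h₃)

/-- A 3-Leibniz-Lie algebra: a 3-Lie algebra `(H, brH)` together with a
trilinear product `tr` satisfying the compatibility conditions. -/
def Is3LeibnizLie (K : Type*) [Field K] {H : Type*} [AddCommGroup H] [Module K H]
    (brH : H → H → H → H) (tr : H → H → H → H) : Prop :=
  Is3Lie K brH ∧ Trilinear K tr ∧
  (∀ h₁ h₂ h₃ h₄ h₅, tr h₁ h₂ (tr h₃ h₄ h₅)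
      = tr (tr h₁ h₂ h₃) h₄ h₅ + tr h₃ (tr h₁ h₂ h₄) h₅ + tr h₃ h₄ (tr h₁ h₂ h₅)
        + tr (brH h₁ h₂ h₃) h₄ h₅ + tr h₃ (brH h₁ h₂ h₄) h₅) ∧
  (∀ h₁ h₂ h₃ h₄ h₅, tr h₁ h₂ (brH h₃ h₄ h₅) = 0) ∧
  (∀ h₁ h₂ h₃ h₄ h₅, brH (tr h₁ h₂ h₃) h₄ h₅ = 0)

/-- A representation of a 3-Leibniz algebra `(A, br)` on `V` via actions `l`, `m`, `r`. -/
def Is3LeibnizRep (K : Type*) [Field K] {A V : Type*} [AddCommGroup A] [Module K A]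
    [AddCommGroup V] [Module K V] (br : A → A → A → A)
    (l : A → A → V → V) (m : A → V → A → V) (r : V → A → A → V) : Prop :=
  Trilinear K l ∧ Trilinear K m ∧ Trilinear K r ∧
  (∀ a₁ a₂ a₃ a₄ u, l a₁ a₂ (l a₃ a₄ u)
      = l (br a₁ a₂ a₃) a₄ u + l a₃ (br a₁ a₂ a₄) u + l a₃ a₄ (l a₁ a₂ u)) ∧
  (∀ a₁ a₂ a₃ a₅ u, l a₁ a₂ (m a₃ u a₅)
      = m (br a₁ a₂ a₃) u a₅ + m a₃ (l a₁ a₂ u) a₅ + m a₃ u (br a₁ a₂ a₅)) ∧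
  (∀ a₁ a₂ a₄ a₅ u, l a₁ a₂ (r u a₄ a₅)
      = r (l a₁ a₂ u) a₄ a₅ + r u (br a₁ a₂ a₄) a₅ + r u a₄ (br a₁ a₂ a₅)) ∧
  (∀ a₁ a₃ a₄ a₅ u, m a₁ u (br a₃ a₄ a₅)
      = r (m a₁ u a₃) a₄ a₅ + m a₃ (m a₁ u a₄) a₅ + l a₃ a₄ (m a₁ u a₅)) ∧
  (∀ a₂ a₃ a₄ a₅ u, r u a₂ (br a₃ a₄ a₅)
      = r (r u a₂ a₃) a₄ a₅ + m a₃ (r u a₂ a₄) a₅ + l a₃ a₄ (r u a₂ a₅))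

theorem Trilinear.add {K : Type*} [Field K] {V₁ V₂ V₃ W : Type*}
    [AddCommGroup V₁] [Module K V₁] [AddCommGroup V₂] [Module K V₂]
    [AddCommGroup V₃] [Module K V₃] [AddCommGroup W] [Module K W]
    {f g : V₁ → V₂ → V₃ → W} (hf : Trilinear K f) (hg : Trilinear K g) :
    Trilinear K (fun a b c => f a b c + g a b c) := by
  obtain ⟨f₁, f₂, f₃, f₄, f₅, f₆⟩ := hf
  obtain ⟨g₁, g₂, g₃, g₄, g₅, g₆⟩ := hg
  refine ⟨?_, ?_, ?_, ?_, ?_, ?_⟩ <;> intros <;>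
    simp only [f₁, f₂, f₃, f₄, f₅, f₆, g₁, g₂, g₃, g₄, g₅, g₆, smul_add] <;> abel

theorem Skew.apply_eq_zero_of_left {V : Type*} [AddCommGroup V] {f : V → V → V → V}
    (hf : Skew f) {x : V} (hx : ∀ b c, f x b c = 0) (a b : V) :
    f a x b = 0 ∧ f a b x = 0 := by
  have hmid : ∀ c, f a x c = 0 := fun c => by rw [hf.1, hx, neg_zero]
  exact ⟨hmid b, by rw [hf.2, hmid, neg_zero]⟩

theorem fundId_add {K V : Type*} [Field K] [AddCommGroup V] [Module K V]
    {f g : V → V → V → V} (hf : Trilinear K f) (hg : Trilinear K g) (hfid : FundId f)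
    (hgid : ∀ a b c d e, g a b (g c d e)
      = g (g a b c) d e + g c (g a b d) e + g c d (g a b e) + g (f a b c) d e + g c (f a b d) e)
    (hgf : ∀ a b c d e, g a b (f c d e) = 0)
    (hfg₁ : ∀ a b c d e, f (g a b c) d e = 0)
    (hfg₂ : ∀ a b c d e, f a (g b c d) e = 0)
    (hfg₃ : ∀ a b c d e, f a b (g c d e) = 0) :
    FundId (fun a b c => f a b c + g a b c) := by
  obtain ⟨f₁, -, f₃, -, f₅, -⟩ := hf
  obtain ⟨g₁, -, g₃, -, g₅, -⟩ := hg
  intro a b c d e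
  simp only [f₁, f₃, f₅, g₁, g₃, g₅, hgf, hfg₁, hfg₂, hfg₃, add_zero, zero_add]
  rw [hfid, hgid]
  abel

/-- the subadjacent bracket `⟨h₁,h₂,h₃⟩ = [h₁,h₂,h₃]_H + {h₁,h₂,h₃}_H`
of a 3-Leibniz-Lie algebra is a 3-Leibniz algebra structure. -/
theorem subadjacent_3Leibniz
    {K H : Type*} [Field K] [AddCommGroup H] [Module K H]
    (brH tr : H → H → H → H) (h : Is3LeibnizLie K brH tr) :
    Is3Leibniz K (fun a b c => brH a b c + tr a b c) := by
  obtain ⟨⟨hbr, hskew, hfid⟩, htr, hleib, htr_br, hbr_tr⟩ := h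
  have hbr_tr' (a b c d e : H) := hskew.apply_eq_zero_of_left (hbr_tr c d e) a b
  exact ⟨hbr.add htr, fundId_add hbr htr hfid hleib htr_br hbr_tr
    (fun a b c d e => (hbr_tr' a e b c d).1) (fun a b c d e => (hbr_tr' a b c d e).2)⟩
end

section
/- Let $H\xrightarrow{\Lambda}L$ be a nonabelian embedding tensor 3-Lie algebra. For $a_1,a_2\in L$ define $\delta_\Lambda(a_1,a_2):H\to L$ by $\delta_\Lambda(a_1,a_2)u=\Lambda\rho(a_1,a_2)u-[a_1,a_2,\Lambda u]_L$, and for $\phi:H\to L$ define $(\delta_\Lambda\phi)(u,v,w)=-\phi([u,v,w]_\Lambda)+[\Lambda u,\Lambda v,\phi(w)]_L+[\Lambda u,\phi(v),\Lambda w]_L-\Lambda\rho(\Lambda u,\phi(v))w+[\phi(u),\Lambda v,\Lambda w]_L-\Lambda\rho(\phi(u),\Lambda v)w$. Then $\delta_\Lambda(\delta_\Lambda(a_1,a_2))=0$. -/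
/-!
Write `δ₀(a₁,a₂) = Λ ∘ ρ(a₁,a₂) - [a₁,a₂,-]_L ∘ Λ`; the coboundary `δ₁` is additive in the cochain,
and both pieces have the same image `-Λ(ρ([a₁,a₂,Λu],Λv)w + ρ(Λu,[a₁,a₂,Λv])w)`. For the
bracket piece this is the fundamental identity of `L` applied to `Λ[u,v,w]_Λ = [Λu,Λv,Λw]`. For
the action piece, the embedding-tensor identity moves every bracket into `Λ(...)`, where the
`[-,-,-]_H` terms cancel because `ρ(a₁,a₂)` is a derivation of `H`, and what is left is the
representation axiom for `ρ(a₁,a₂) ρ(Λu,Λv)`.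
-/

namespace Trilinear

variable {K : Type*} [Field K] {V₁ V₂ V₃ W : Type*}
  [AddCommGroup V₁] [Module K V₁] [AddCommGroup V₂] [Module K V₂]
  [AddCommGroup V₃] [Module K V₃] [AddCommGroup W] [Module K W]
  {f : V₁ → V₂ → V₃ → W}

theorem map_sub₁ (hf : Trilinear K f) (x y : V₁) (b : V₂) (c : V₃) :
    f (x - y) b c = f x b c - f y b c :=
  map_sub (AddMonoidHom.mk' (f · b c) fun x y => hf.1 x y b c) x y

theorem map_sub₂ (hf : Trilinear K f) (a : V₁) (x y : V₂) (c : V₃) :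
    f a (x - y) c = f a x c - f a y c :=
  map_sub (AddMonoidHom.mk' (f a · c) fun x y => hf.2.2.1 a x y c) x y

theorem map_sub₃ (hf : Trilinear K f) (a : V₁) (b : V₂) (x y : V₃) :
    f a b (x - y) = f a b x - f a b y :=
  map_sub (AddMonoidHom.mk' (f a b ·) fun x y => hf.2.2.2.2.1 a b x y) x y

end Trilinear

namespace NAEmbeddingTensor

variable {K L H : Type*} [Field K] [AddCommGroup L] [Module K L] [AddCommGroup H] [Module K H]
  {brL : L → L → L → L} {brH : H → H → H → H} {ρ : L → L → H → H} {Λ : H →ₗ[K] L}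

variable (brH ρ Λ) in
def descBracket (u v w : H) : H :=
  ρ (Λ u) (Λ v) w + brH u v w

variable (brL ρ Λ) in
def coboundary₀ (a₁ a₂ : L) (x : H) : L :=
  Λ (ρ a₁ a₂ x) - brL a₁ a₂ (Λ x)

variable (brL brH ρ Λ) in
def coboundary₁ (φ : H → L) (u v w : H) : L :=
  -φ (descBracket brH ρ Λ u v w) + brL (Λ u) (Λ v) (φ w) + brL (Λ u) (φ v) (Λ w)
    - Λ (ρ (Λ u) (φ v) w) + brL (φ u) (Λ v) (Λ w) - Λ (ρ (φ u) (Λ v) w)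

theorem coboundary₁_sub (hL : Trilinear K brL) (hρ : Trilinear K ρ) (φ ψ : H → L) (u v w : H) :
    coboundary₁ brL brH ρ Λ (φ - ψ) u v w
      = coboundary₁ brL brH ρ Λ φ u v w - coboundary₁ brL brH ρ Λ ψ u v w := by
  simp only [coboundary₁, Pi.sub_apply, hL.map_sub₁, hL.map_sub₂, hL.map_sub₃, hρ.map_sub₁,
    hρ.map_sub₂, map_sub]
  abel

theorem coboundary₁_bracket_comp (hL : FundId brL) (hΛ : IsNAEmbeddingTensor K brL brH ρ Λ)
    (a₁ a₂ : L) (u v w : H) :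
    coboundary₁ brL brH ρ Λ (fun x => brL a₁ a₂ (Λ x)) u v w
      = -Λ (ρ (brL a₁ a₂ (Λ u)) (Λ v) w + ρ (Λ u) (brL a₁ a₂ (Λ v)) w) := by
  rw [coboundary₁, descBracket, ← hΛ, hL, map_add]
  abel

theorem coboundary₁_comp_action (hρ : IsCoherentAction K brL brH ρ)
    (hΛ : IsNAEmbeddingTensor K brL brH ρ Λ) (a₁ a₂ : L) (u v w : H) :
    coboundary₁ brL brH ρ Λ (fun x => Λ (ρ a₁ a₂ x)) u v w
      = -Λ (ρ (brL a₁ a₂ (Λ u)) (Λ v) w + ρ (Λ u) (brL a₁ a₂ (Λ v)) w) := by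
  obtain ⟨⟨hρtri, -, -, hρcomm⟩, hder, -⟩ := hρ
  rw [coboundary₁, descBracket, hΛ, hΛ, hΛ, hρtri.2.2.2.2.1, hder, hρcomm]
  simp only [map_add]
  abel

theorem coboundary₁_coboundary₀ (hL : Is3Lie K brL) (hρ : IsCoherentAction K brL brH ρ)
    (hΛ : IsNAEmbeddingTensor K brL brH ρ Λ) (a₁ a₂ : L) (u v w : H) :
    coboundary₁ brL brH ρ Λ (coboundary₀ brL ρ Λ a₁ a₂) u v w = 0 := by
  have hsplit : coboundary₀ brL ρ Λ a₁ a₂ = (fun x => Λ (ρ a₁ a₂ x)) - fun x => brL a₁ a₂ (Λ x) :=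
    rfl
  rw [hsplit, coboundary₁_sub hL.1 hρ.1.1, coboundary₁_comp_action hρ hΛ,
    coboundary₁_bracket_comp hL.2.2 hΛ, sub_self]

end NAEmbeddingTensor

theorem delta_squared_zero_general
    {K L H : Type*} [Field K] [AddCommGroup L] [Module K L] [AddCommGroup H] [Module K H]
    (brL : L → L → L → L) (brH : H → H → H → H) (ρ : L → L → H → H)
    (hL : Is3Lie K brL) (hρ : IsCoherentAction K brL brH ρ)
    (Λ : H →ₗ[K] L) (hΛ : IsNAEmbeddingTensor K brL brH ρ Λ) :
    ∀ (a₁ a₂ : L) (u v w : H),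
      -(Λ (ρ a₁ a₂ (ρ (Λ u) (Λ v) w + brH u v w))
          - brL a₁ a₂ (Λ (ρ (Λ u) (Λ v) w + brH u v w)))
        + brL (Λ u) (Λ v) (Λ (ρ a₁ a₂ w) - brL a₁ a₂ (Λ w))
        + brL (Λ u) (Λ (ρ a₁ a₂ v) - brL a₁ a₂ (Λ v)) (Λ w)
        - Λ (ρ (Λ u) (Λ (ρ a₁ a₂ v) - brL a₁ a₂ (Λ v)) w)
        + brL (Λ (ρ a₁ a₂ u) - brL a₁ a₂ (Λ u)) (Λ v) (Λ w)
        - Λ (ρ (Λ (ρ a₁ a₂ u) - brL a₁ a₂ (Λ u)) (Λ v) w) = 0 :=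
  NAEmbeddingTensor.coboundary₁_coboundary₀ hL hρ hΛ

/-- `δ_Λ (δ_Λ (a₁, a₂)) = 0`, where `δ_Λ(a₁,a₂) x = Λ(ρ(a₁,a₂)x) - [a₁,a₂,Λx]_L`
(written `φ x` below, fully inlined) and `δ_Λ` on 1-cochains is the coboundary of the
descendent 3-Leibniz algebra `[u,v,w]_Λ = ρ(Λu,Λv)w + [u,v,w]_H` with coefficients in `L`:
`(δ_Λ φ)(u,v,w) = -φ([u,v,w]_Λ) + [Λu,Λv,φw]_L + [Λu,φv,Λw]_L - Λ(ρ(Λu,φv)w)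
  + [φu,Λv,Λw]_L - Λ(ρ(φu,Λv)w)`. -/
theorem delta_squared_zero
    {K L H : Type*} [Field K] [AddCommGroup L] [Module K L] [AddCommGroup H] [Module K H]
    (brL : L → L → L → L) (brH : H → H → H → H) (ρ : L → L → H → H)
    (hL : Is3Lie K brL) (hH : Is3Lie K brH) (hρ : IsCoherentAction K brL brH ρ)
    (Λ : H →ₗ[K] L) (hΛ : IsNAEmbeddingTensor K brL brH ρ Λ) :
    ∀ (a₁ a₂ : L) (u v w : H),
      -(Λ (ρ a₁ a₂ (ρ (Λ u) (Λ v) w + brH u v w))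
          - brL a₁ a₂ (Λ (ρ (Λ u) (Λ v) w + brH u v w)))
        + brL (Λ u) (Λ v) (Λ (ρ a₁ a₂ w) - brL a₁ a₂ (Λ w))
        + brL (Λ u) (Λ (ρ a₁ a₂ v) - brL a₁ a₂ (Λ v)) (Λ w)
        - Λ (ρ (Λ u) (Λ (ρ a₁ a₂ v) - brL a₁ a₂ (Λ v)) w)
        + brL (Λ (ρ a₁ a₂ u) - brL a₁ a₂ (Λ u)) (Λ v) (Λ w)
        - Λ (ρ (Λ (ρ a₁ a₂ u) - brL a₁ a₂ (Λ u)) (Λ v) w) = 0 :=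
  delta_squared_zero_general brL brH ρ hL hρ Λ hΛ
end

section
/- Let $(H,[-,-]_H,\rhd)$ be a Leibniz-Lie algebra and $\varsigma\in H^*$ a linear map with $\varsigma([h_1,h_2]_H)=0$ and $\varsigma(h_1\rhd h_2)=0$ for all $h_1,h_2$. Then with $[h_1,h_2,h_3]_{H_\varsigma}=\varsigma(h_1)[h_2,h_3]_H+\varsigma(h_2)[h_3,h_1]_H+\varsigma(h_3)[h_1,h_2]_H$ and $\{h_1,h_2,h_3\}_{H_\varsigma}=\varsigma(h_1)\,h_2\rhd h_3-\varsigma(h_2)\,h_1\rhd h_3$, the triple $(H,[-,-,-]_{H_\varsigma},\{-,-,-\}_{H_\varsigma})$ is a 3-Leibniz-Lie algebra. -/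
/-!
Put `u = ς a • b - ς b • a` and `w = ⁅a, b⁆`. Since `ς` kills brackets, the left multiplication
`[a, b, -]` of the induced ternary bracket is `ad u + ς(-) • w` with `ς w = 0`, and both summands
are derivations of the ternary bracket; this is the fundamental identity. Likewise
`{a, b, -} = u ▷ -`, and the Leibniz identity of `▷` for `u` gives the compatibility identity of
`{-, -, -}` up to the terms `ς r • {w, s, t} + ς s • {r, w, t}`, which cancel since `ς w = 0`.
-/

/-- `FundId f` says exactly that every `f a b` is a derivation of `f`. -/
def IsTernaryDerivation {V : Type*} [AddCommGroup V] (f : V → V → V → V) (D : V → V) : Prop :=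
  ∀ a b c, D (f a b c) = f (D a) b c + f a (D b) c + f a b (D c)

theorem IsTernaryDerivation.add {K V : Type*} [Field K] [AddCommGroup V] [Module K V]
    {f : V → V → V → V} (hf : Trilinear K f) {D₁ D₂ : V → V}
    (h₁ : IsTernaryDerivation f D₁) (h₂ : IsTernaryDerivation f D₂) :
    IsTernaryDerivation f (D₁ + D₂) := by
  obtain ⟨hadd₁, -, hadd₂, -, hadd₃, -⟩ := hf
  intro a b c
  rw [Pi.add_apply, h₁ a b c, h₂ a b c]
  simp only [Pi.add_apply, hadd₁, hadd₂, hadd₃]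
  abel

section CommRing

variable {K H : Type*} [CommRing K] [LieRing H] [LieAlgebra K H]

def traceBracket (ς : H →ₗ[K] K) (a b c : H) : H :=
  ς a • ⁅b, c⁆ + ς b • ⁅c, a⁆ + ς c • ⁅a, b⁆

def traceProduct (ς : H →ₗ[K] K) (B : H →ₗ[K] H →ₗ[K] H) (a b c : H) : H :=
  ς a • B b c - ς b • B a c

variable (ς : H →ₗ[K] K)

theorem traceBracket_eq_lie_add_smul (a b x : H) :
    traceBracket ς a b x = ⁅ς a • b - ς b • a, x⁆ + ς x • ⁅a, b⁆ := by
  rw [traceBracket, sub_lie, smul_lie, smul_lie, ← lie_skew x a]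
  module

theorem trace_traceBracket (hς : ∀ a b : H, ς ⁅a, b⁆ = 0) (a b c : H) :
    ς (traceBracket ς a b c) = 0 := by
  simp [traceBracket, hς]

theorem isTernaryDerivation_traceBracket_lie (hς : ∀ a b : H, ς ⁅a, b⁆ = 0) (u : H) :
    IsTernaryDerivation (traceBracket ς) (fun x => ⁅u, x⁆) := by
  intro c d e
  simp only [traceBracket, lie_add, lie_smul, leibniz_lie u, hς, zero_smul, smul_add]
  module

theorem isTernaryDerivation_traceBracket_smul (hς : ∀ a b : H, ς ⁅a, b⁆ = 0) {w : H}
    (hw : ς w = 0) : IsTernaryDerivation (traceBracket ς) (fun x => ς x • w) := by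
  intro c d e
  dsimp only
  rw [trace_traceBracket ς hς, zero_smul]
  simp only [traceBracket, map_smul, hw, smul_eq_mul, mul_zero, lie_smul, smul_lie]
  rw [← lie_skew w c, ← lie_skew w d, ← lie_skew w e]
  module

variable (B : H →ₗ[K] H →ₗ[K] H)

theorem traceProduct_eq (a b x : H) : traceProduct ς B a b x = B (ς a • b - ς b • a) x := by
  simp [traceProduct]

theorem traceProduct_add_left (x y b c : H) :
    traceProduct ς B (x + y) b c = traceProduct ς B x b c + traceProduct ς B y b c := by
  simp only [traceProduct, map_add, add_smul, LinearMap.add_apply]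
  module

theorem traceProduct_add_mid (a x y c : H) :
    traceProduct ς B a (x + y) c = traceProduct ς B a x c + traceProduct ς B a y c := by
  simp only [traceProduct, map_add, add_smul, LinearMap.add_apply]
  module

theorem traceProduct_smul_left (r : K) (x b c : H) :
    traceProduct ς B (r • x) b c = r • traceProduct ς B x b c := by
  simp only [traceProduct, map_smul, smul_eq_mul, LinearMap.smul_apply]
  module

theorem traceProduct_smul_mid (r : K) (a x c : H) :
    traceProduct ς B a (r • x) c = r • traceProduct ς B a x c := by
  simp only [traceProduct, map_smul, smul_eq_mul, LinearMap.smul_apply]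
  module

theorem smul_traceProduct_add_smul_traceProduct {w : H} (hw : ς w = 0) (r s t : H) :
    ς r • traceProduct ς B w s t + ς s • traceProduct ς B r w t = 0 := by
  simp only [traceProduct, hw, zero_smul, zero_sub, smul_neg, sub_zero, smul_smul, mul_comm]
  exact neg_add_cancel _

theorem apply_traceProduct (hς₁ : ∀ a b : H, ς ⁅a, b⁆ = 0) (hς₂ : ∀ a b : H, ς (B a b) = 0)
    (hB : ∀ a b c, B a (B b c) = B (B a b) c + B b (B a c) + B ⁅a, b⁆ c) (u r s t : H) :
    B u (traceProduct ς B r s t)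
      = traceProduct ς B (B u r) s t + traceProduct ς B r (B u s) t
        + traceProduct ς B r s (B u t) + traceProduct ς B ⁅u, r⁆ s t
        + traceProduct ς B r ⁅u, s⁆ t := by
  simp only [traceProduct, map_sub, map_smul, hB u s t, hB u r t, hς₁, hς₂, zero_smul]
  module

theorem traceProduct_traceProduct (hς₁ : ∀ a b : H, ς ⁅a, b⁆ = 0)
    (hς₂ : ∀ a b : H, ς (B a b) = 0)
    (hB : ∀ a b c, B a (B b c) = B (B a b) c + B b (B a c) + B ⁅a, b⁆ c) (p q r s t : H) :
    traceProduct ς B p q (traceProduct ς B r s t)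
      = traceProduct ς B (traceProduct ς B p q r) s t
        + traceProduct ς B r (traceProduct ς B p q s) t
        + traceProduct ς B r s (traceProduct ς B p q t)
        + traceProduct ς B (traceBracket ς p q r) s t
        + traceProduct ς B r (traceBracket ς p q s) t := by
  have hcancel := smul_traceProduct_add_smul_traceProduct ς B (hς₁ p q) r s t
  simp only [traceProduct_eq ς B p q, apply_traceProduct ς B hς₁ hς₂ hB,
    traceBracket_eq_lie_add_smul ς p q, traceProduct_add_left, traceProduct_add_mid,
    traceProduct_smul_left, traceProduct_smul_mid]
  linear_combination (norm := module) -hcancel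

theorem traceProduct_traceBracket (hB : ∀ a b c : H, B a ⁅b, c⁆ = 0) (p q r s t : H) :
    traceProduct ς B p q (traceBracket ς r s t) = 0 := by
  simp [traceProduct, traceBracket, hB]

theorem traceBracket_traceProduct (hς : ∀ a b : H, ς (B a b) = 0)
    (hB : ∀ a b c : H, ⁅B a b, c⁆ = 0) (p q r s t : H) :
    traceBracket ς (traceProduct ς B p q r) s t = 0 := by
  simp [traceBracket, traceProduct_eq, hς, hB, ← lie_skew _ (B _ _)]

end CommRing

section Field

variable {K H : Type*} [Field K] [LieRing H] [LieAlgebra K H] (ς : H →ₗ[K] K)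

theorem trilinear_traceBracket : Trilinear K (traceBracket ς) := by
  refine ⟨?_, ?_, ?_, ?_, ?_, ?_⟩ <;> intros <;>
    simp only [traceBracket, map_add, map_smul, add_smul, smul_eq_mul, lie_add, add_lie,
      lie_smul, smul_lie] <;>
    module

theorem skew_traceBracket : Skew (traceBracket ς) := by
  constructor <;> intro a b c <;>
    simp only [traceBracket, ← lie_skew c a, ← lie_skew c b, ← lie_skew b a] <;>
    module

theorem fundId_traceBracket (hς : ∀ a b : H, ς ⁅a, b⁆ = 0) : FundId (traceBracket ς) := by
  intro a b
  have hmul : traceBracket ς a b = (fun x => ⁅ς a • b - ς b • a, x⁆) + fun x => ς x • ⁅a, b⁆ :=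
    funext (traceBracket_eq_lie_add_smul ς a b)
  rw [hmul]
  exact (isTernaryDerivation_traceBracket_lie ς hς _).add (trilinear_traceBracket ς)
    (isTernaryDerivation_traceBracket_smul ς hς (hς a b))

theorem is3Lie_traceBracket (hς : ∀ a b : H, ς ⁅a, b⁆ = 0) : Is3Lie K (traceBracket ς) :=
  ⟨trilinear_traceBracket ς, skew_traceBracket ς, fundId_traceBracket ς hς⟩

variable (B : H →ₗ[K] H →ₗ[K] H)

theorem trilinear_traceProduct : Trilinear K (traceProduct ς B) := by
  refine ⟨traceProduct_add_left ς B, traceProduct_smul_left ς B, traceProduct_add_mid ς B,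
    traceProduct_smul_mid ς B, ?_, ?_⟩ <;> intros <;>
    simp only [traceProduct, map_add, map_smul] <;>
    module

theorem is3LeibnizLie_traceBracket_traceProduct
    (hB₁ : ∀ a b c, B a (B b c) = B (B a b) c + B b (B a c) + B ⁅a, b⁆ c)
    (hB₂ : ∀ a b c : H, B a ⁅b, c⁆ = 0) (hB₃ : ∀ a b c : H, ⁅B a b, c⁆ = 0)
    (hς₁ : ∀ a b : H, ς ⁅a, b⁆ = 0) (hς₂ : ∀ a b : H, ς (B a b) = 0) :
    Is3LeibnizLie K (traceBracket ς) (traceProduct ς B) :=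
  ⟨is3Lie_traceBracket ς hς₁, trilinear_traceProduct ς B,
    traceProduct_traceProduct ς B hς₁ hς₂ hB₁, traceProduct_traceBracket ς B hB₂,
    traceBracket_traceProduct ς B hς₂ hB₃⟩

end Field

/-- a Leibniz-Lie algebra with a trace map `ς` induces a
3-Leibniz-Lie algebra. -/
theorem leibnizLie_trace_gives_3LeibnizLie
    {K H : Type*} [Field K] [LieRing H] [LieAlgebra K H]
    (rhd : H → H → H) (hbil : Bilinear K rhd)
    (h1 : ∀ a b c, rhd a (rhd b c) = rhd (rhd a b) c + rhd b (rhd a c) + rhd ⁅a, b⁆ c)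
    (h2 : ∀ a b c : H, rhd a ⁅b, c⁆ = 0)
    (h3 : ∀ a b c : H, ⁅rhd a b, c⁆ = 0)
    (ς : H →ₗ[K] K) (hς1 : ∀ a b : H, ς ⁅a, b⁆ = 0) (hς2 : ∀ a b, ς (rhd a b) = 0) :
    Is3LeibnizLie K
      (fun a b c : H => ς a • ⁅b, c⁆ + ς b • ⁅c, a⁆ + ς c • ⁅a, b⁆)
      (fun a b c => ς a • rhd b c - ς b • rhd a c) := by
  obtain ⟨hadd₁, hsmul₁, hadd₂, hsmul₂⟩ := hbil
  exact is3LeibnizLie_traceBracket_traceProduct ς (LinearMap.mk₂ K rhd hadd₁ hsmul₁ hadd₂ hsmul₂)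
    h1 h2 h3 hς1 hς2
end
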